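/- With normalization N_{λℓ}(L) = L^{−d/2} |2^{ℓ−(d−2)/2} Γ(ℓ+d/2) Γ(iλ)/Γ(iλ+ρ+ℓ)|^{−1} and degeneracy G_ℓ = (2ℓ+d−2)(ℓ+d−3)!/(ℓ!(d−2)!), the product G_ℓ N_{λℓ}(L)² is asymptotically bounded by a constant times 2^{−2ℓ} ℓ^{d−3} as ℓ → ∞. -/

import Mathlib

open Real Filter
open scoped Nat

/-!
Put `s = ℓ + (d - 2) / 2`, so that `Γ(ℓ + d/2) = Γ(s + 1)` and `Re (iλ + ρ + ℓ) = s + 1/2`.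
Bounding `|Γ z|` by `Γ (Re z)` and using log-convexity of `Γ` on `[s, s + 1]`,
`|Γ(iλ + ρ + ℓ)|² ≤ Γ(s + 1/2)² ≤ Γ(s) Γ(s + 1) = Γ(s + 1)² / s`, hence
`N_{λℓ}(L)² ≤ L^{-d} |Γ(iλ)|^{-2} 2^{d-2} 2^{-2ℓ} / ℓ`. On the other side
`(ℓ + d - 2)! ≤ ℓ! (ℓ + d - 2)^{d-2}` gives `G_ℓ = O(ℓ^{d-2})`.
-/

lemma Complex.norm_Gamma_le_Gamma_re {z : ℂ} (hz : 0 < z.re) :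
    ‖Complex.Gamma z‖ ≤ Real.Gamma z.re := by
  rw [Complex.Gamma_eq_integral hz, Complex.GammaIntegral, Real.Gamma_eq_integral hz]
  refine (MeasureTheory.norm_integral_le_integral_norm _).trans_eq ?_
  refine MeasureTheory.setIntegral_congr_fun measurableSet_Ioi fun x hx => ?_
  simp only [norm_mul, Complex.norm_real, Real.norm_eq_abs,
    Complex.norm_cpow_eq_rpow_re_of_pos hx, abs_of_pos (Real.exp_pos _), Complex.sub_re,
    Complex.one_re]

lemma Real.Gamma_add_half_sq_le {s : ℝ} (hs : 0 < s) :
    Gamma (s + 1 / 2) ^ 2 ≤ Gamma s * Gamma (s + 1) := by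
  have h := Gamma_mul_add_mul_le_rpow_Gamma_mul_rpow_Gamma hs (by linarith : 0 < s + 1)
    one_half_pos one_half_pos (by norm_num)
  rw [show 1 / 2 * s + 1 / 2 * (s + 1) = s + 1 / 2 by ring, ← sqrt_eq_rpow, ← sqrt_eq_rpow,
    ← sqrt_mul (Gamma_pos_of_pos hs).le] at h
  calc Gamma (s + 1 / 2) ^ 2 ≤ √(Gamma s * Gamma (s + 1)) ^ 2 :=
        pow_le_pow_left₀ (Gamma_pos_of_pos (by linarith)).le h 2
    _ = Gamma s * Gamma (s + 1) :=
        sq_sqrt (mul_pos (Gamma_pos_of_pos hs) (Gamma_pos_of_pos (by linarith))).le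

lemma Complex.norm_Gamma_sq_mul_le {z : ℂ} (hz : 1 / 2 < z.re) :
    ‖Complex.Gamma z‖ ^ 2 * (z.re - 1 / 2) ≤ Real.Gamma (z.re + 1 / 2) ^ 2 := by
  set s := z.re - 1 / 2 with hs_def
  have hs : 0 < s := by linarith
  have hz' : z.re = s + 1 / 2 := by ring
  have hΓ : Real.Gamma (s + 1) = s * Real.Gamma s := Real.Gamma_add_one hs.ne'
  calc ‖Complex.Gamma z‖ ^ 2 * s ≤ Real.Gamma (s + 1 / 2) ^ 2 * s := by
        gcongr
        rw [← hz']
        exact Complex.norm_Gamma_le_Gamma_re (by linarith)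
    _ ≤ Real.Gamma s * Real.Gamma (s + 1) * s := by gcongr; exact Real.Gamma_add_half_sq_le hs
    _ = Real.Gamma (z.re + 1 / 2) ^ 2 := by rw [hz', add_assoc, add_halves, hΓ]; ring

lemma Nat.factorial_add_le_factorial_mul_pow (ℓ n : ℕ) : (ℓ + n)! ≤ ℓ ! * (ℓ + n) ^ n := by
  rw [← Nat.factorial_mul_ascFactorial]
  exact Nat.mul_le_mul_left _ (Nat.ascFactorial_le_pow_add ℓ n)

lemma degeneracy_le {d ℓ : ℕ} (hd : 2 ≤ d) (hℓ : 1 ≤ ℓ) :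
    (2 * (ℓ : ℝ) + d - 2) * ((ℓ + d - 3)! : ℝ) / ((ℓ ! : ℝ) * ((d - 2)! : ℝ))
      ≤ 2 * ((d - 1 : ℕ) : ℝ) ^ (d - 2) * (ℓ : ℝ) ^ (d - 2) := by
  obtain ⟨n, rfl⟩ := Nat.exists_eq_add_of_le' hd
  have hnat : (2 * ℓ + n) * (ℓ + n - 1)! ≤ 2 * ℓ ! * ((n + 1) * ℓ) ^ n :=
    calc (2 * ℓ + n) * (ℓ + n - 1)! ≤ 2 * ((ℓ + n) * (ℓ + n - 1)!) := by
          rw [← mul_assoc]; gcongr; omega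
      _ = 2 * (ℓ + n)! := by rw [Nat.mul_factorial_pred (by omega)]
      _ ≤ 2 * (ℓ ! * ((n + 1) * ℓ) ^ n) := by
          gcongr
          refine (Nat.factorial_add_le_factorial_mul_pow ℓ n).trans ?_
          gcongr
          nlinarith
      _ = 2 * ℓ ! * ((n + 1) * ℓ) ^ n := by ring
  have hreal : (2 * (ℓ : ℝ) + n) * ((ℓ + n - 1)! : ℝ) ≤ 2 * ℓ ! * ((n + 1) * ℓ) ^ n := by
    exact_mod_cast hnat
  rw [show ℓ + (n + 2) - 3 = ℓ + n - 1 by omega, Nat.add_sub_cancel,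
    show n + 2 - 1 = n + 1 by omega, div_le_iff₀ (by positivity)]
  push_cast
  have hfac : (1 : ℝ) ≤ n ! := by exact_mod_cast Nat.one_le_iff_ne_zero.2 n.factorial_ne_zero
  calc (2 * (ℓ : ℝ) + (n + 2) - 2) * ((ℓ + n - 1)! : ℝ)
        = (2 * (ℓ : ℝ) + n) * ((ℓ + n - 1)! : ℝ) := by ring
    _ ≤ 2 * ℓ ! * ((n + 1) * ℓ) ^ n := hreal
    _ ≤ 2 * ℓ ! * ((n + 1) * ℓ) ^ n * n ! := le_mul_of_one_le_right (by positivity) hfac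
    _ = _ := by rw [mul_pow]; ring

lemma inv_norm_normalization_sq_le {d ℓ : ℕ} (hd : 2 ≤ d) (hℓ : 1 ≤ ℓ) (lam : ℝ) :
    (‖(2:ℂ) ^ ((ℓ:ℂ) - ((d:ℂ) - 2) / 2) * Complex.Gamma ((ℓ:ℂ) + (d:ℂ) / 2)
        * Complex.Gamma (Complex.I * lam)
        / Complex.Gamma (Complex.I * lam + ((((d:ℝ) - 1) / 2 : ℝ) : ℂ) + (ℓ:ℂ))‖⁻¹) ^ 2
      ≤ (2:ℝ) ^ ((d:ℝ) - 2) * (2:ℝ) ^ (-(2:ℝ) * ℓ) * ‖Complex.Gamma (Complex.I * lam)‖⁻¹ ^ 2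
        / ℓ := by
  set z := Complex.I * lam + ((((d:ℝ) - 1) / 2 : ℝ) : ℂ) + (ℓ:ℂ)
  set s : ℝ := ℓ + ((d:ℝ) - 2) / 2
  have hℓ0 : (0:ℝ) < ℓ := by exact_mod_cast hℓ
  have hd2 : (2:ℝ) ≤ d := by exact_mod_cast hd
  have hs : (ℓ:ℝ) ≤ s := by simp only [s]; linarith
  have hz : z.re = s + 1 / 2 := by
    simp only [z, s, Complex.add_re, Complex.re_mul_ofReal, Complex.I_re, Complex.ofReal_re,
      Complex.natCast_re]
    ring
  have hGamma : ‖Complex.Gamma ((ℓ:ℂ) + (d:ℂ) / 2)‖ = Real.Gamma (z.re + 1 / 2) := by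
    rw [hz, show (ℓ:ℂ) + (d:ℂ) / 2 = ((s + 1 / 2 + 1 / 2 : ℝ) : ℂ) by push_cast [s]; ring,
      Complex.Gamma_ofReal, Complex.norm_real, Real.norm_of_nonneg (Real.Gamma_pos_of_pos _).le]
    linarith
  have hpow : ‖(2:ℂ) ^ ((ℓ:ℂ) - ((d:ℂ) - 2) / 2)‖⁻¹ ^ 2
      = (2:ℝ) ^ ((d:ℝ) - 2) * (2:ℝ) ^ (-(2:ℝ) * ℓ) := by
    rw [show (2:ℂ) = ((2:ℝ):ℂ) by norm_num, Complex.norm_cpow_eq_rpow_re_of_pos two_pos,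
      ← Real.rpow_neg two_pos.le, ← Real.rpow_natCast, ← Real.rpow_mul two_pos.le,
      ← Real.rpow_add two_pos]
    congr 1
    simp only [Complex.ofReal_ofNat, Complex.sub_re, Complex.natCast_re, Complex.div_ofNat_re,
      Complex.re_ofNat]
    ring
  have hratio : ‖Complex.Gamma z‖ ^ 2 * (Real.Gamma (z.re + 1 / 2))⁻¹ ^ 2 ≤ (ℓ:ℝ)⁻¹ := by
    have hΓ := Real.Gamma_pos_of_pos (by linarith : 0 < z.re + 1 / 2)
    rw [inv_pow, ← div_eq_mul_inv, div_le_iff₀ (by positivity), ← div_eq_inv_mul,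
      le_div_iff₀ hℓ0]
    calc ‖Complex.Gamma z‖ ^ 2 * ℓ ≤ ‖Complex.Gamma z‖ ^ 2 * (z.re - 1 / 2) := by
          gcongr; linarith
      _ ≤ _ := Complex.norm_Gamma_sq_mul_le (by linarith)
  calc _ = ‖Complex.Gamma z‖ ^ 2 * (Real.Gamma (z.re + 1 / 2))⁻¹ ^ 2
        * ‖(2:ℂ) ^ ((ℓ:ℂ) - ((d:ℂ) - 2) / 2)‖⁻¹ ^ 2 * ‖Complex.Gamma (Complex.I * lam)‖⁻¹ ^ 2 := by
        rw [← hGamma]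
        simp only [norm_mul, div_eq_mul_inv, norm_inv, mul_inv, inv_inv]
        ring
    _ ≤ (ℓ:ℝ)⁻¹ * ((2:ℝ) ^ ((d:ℝ) - 2) * (2:ℝ) ^ (-(2:ℝ) * ℓ))
          * ‖Complex.Gamma (Complex.I * lam)‖⁻¹ ^ 2 := by
        rw [hpow]; gcongr
    _ = _ := by ring

theorem stmt14_general (d : ℕ) (hd : 2 ≤ d) (L lam : ℝ)
    (ρ : ℝ) (hρ : ρ = ((d:ℝ) - 1) / 2)
    (Gdeg : ℕ → ℝ)
    (hG : ∀ ℓ : ℕ, Gdeg ℓ =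
      (2 * (ℓ:ℝ) + (d:ℝ) - 2) * (Nat.factorial (ℓ + d - 3) : ℝ) /
        ((Nat.factorial ℓ : ℝ) * (Nat.factorial (d - 2) : ℝ)))
    (Nfac : ℕ → ℝ)
    (hN : ∀ ℓ : ℕ, Nfac ℓ = L ^ (-(d:ℝ) / 2) *
      (norm ((2:ℂ) ^ ((ℓ:ℂ) - ((d:ℂ) - 2) / 2) * Complex.Gamma ((ℓ:ℂ) + (d:ℂ) / 2)
          * Complex.Gamma (Complex.I * lam)
          / Complex.Gamma (Complex.I * lam + (ρ:ℂ) + (ℓ:ℂ))))⁻¹) :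
    ∃ C : ℝ, ∀ᶠ ℓ : ℕ in atTop,
      Gdeg ℓ * Nfac ℓ ^ 2 ≤ C * (2:ℝ) ^ (-(2:ℝ) * (ℓ:ℝ)) * (ℓ:ℝ) ^ ((d:ℝ) - 3) := by
  subst hρ
  refine ⟨2 * ((d - 1 : ℕ) : ℝ) ^ (d - 2) * (L ^ (-(d:ℝ) / 2)) ^ 2 * (2:ℝ) ^ ((d:ℝ) - 2)
    * ‖Complex.Gamma (Complex.I * lam)‖⁻¹ ^ 2, ?_⟩
  filter_upwards [eventually_ge_atTop 1] with ℓ hℓ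
  have hℓ0 : (0:ℝ) < ℓ := by exact_mod_cast hℓ
  have hexp : (ℓ:ℝ) ^ (d - 2) / ℓ = (ℓ:ℝ) ^ ((d:ℝ) - 3) := by
    rw [← Real.rpow_natCast, Nat.cast_sub hd, ← Real.rpow_sub_one hℓ0.ne']
    congr 1
    push_cast
    ring
  rw [hN ℓ, mul_pow]
  calc Gdeg ℓ * _
        ≤ (2 * ((d - 1 : ℕ) : ℝ) ^ (d - 2) * (ℓ:ℝ) ^ (d - 2)) * ((L ^ (-(d:ℝ) / 2)) ^ 2
        * ((2:ℝ) ^ ((d:ℝ) - 2) * (2:ℝ) ^ (-(2:ℝ) * ℓ) * ‖Complex.Gamma (Complex.I * lam)‖⁻¹ ^ 2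
          / ℓ)) := by
        rw [hG ℓ]
        gcongr
        · exact degeneracy_le hd hℓ
        · exact inv_norm_normalization_sq_le hd hℓ lam
    _ = _ := by rw [← hexp]; ring

/-- With normalization
`N_{λℓ}(L) = L^{−d/2} |2^{ℓ−(d−2)/2} Γ(ℓ+d/2) Γ(iλ)/Γ(iλ+ρ+ℓ)|^{−1}` and degeneracy
`G_ℓ = (2ℓ+d−2)(ℓ+d−3)!/(ℓ!(d−2)!)`, the product `G_ℓ N_{λℓ}(L)²` is bounded, for all
large `ℓ`, by a constant times `2^{−2ℓ} ℓ^{d−3}`. -/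
theorem stmt14 (d : ℕ) (hd : 2 ≤ d) (L lam : ℝ) (hL : 0 < L) (hlam : 0 ≤ lam)
    (ρ : ℝ) (hρ : ρ = ((d:ℝ) - 1) / 2)
    (Gdeg : ℕ → ℝ)
    (hG : ∀ ℓ : ℕ, Gdeg ℓ =
      (2 * (ℓ:ℝ) + (d:ℝ) - 2) * (Nat.factorial (ℓ + d - 3) : ℝ) /
        ((Nat.factorial ℓ : ℝ) * (Nat.factorial (d - 2) : ℝ)))
    (Nfac : ℕ → ℝ)
    (hN : ∀ ℓ : ℕ, Nfac ℓ = L ^ (-(d:ℝ) / 2) *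
      (norm ((2:ℂ) ^ ((ℓ:ℂ) - ((d:ℂ) - 2) / 2) * Complex.Gamma ((ℓ:ℂ) + (d:ℂ) / 2)
          * Complex.Gamma (Complex.I * lam)
          / Complex.Gamma (Complex.I * lam + (ρ:ℂ) + (ℓ:ℂ))))⁻¹) :
    ∃ C : ℝ, ∀ᶠ ℓ : ℕ in atTop,
      Gdeg ℓ * Nfac ℓ ^ 2 ≤ C * (2:ℝ) ^ (-(2:ℝ) * (ℓ:ℝ)) * (ℓ:ℝ) ^ ((d:ℝ) - 3) :=
  stmt14_general d hd L lam ρ hρ Gdeg hG Nfac hN
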